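/- Let S = R × B₁ × ⋯ × B_m × Z₁ × ⋯ × Zₙ with m, n ≥ 0 and m + n ≥ 1 and mn ≠ 0 excluded appropriately (i.e., not both m = 0 and n = 0), where R is a finite commutative antinegative semiring with |R| ≥ 3 and |Z(R)| = 1, each Bᵢ is the Boolean semiring, and each Zⱼ is a finite commutative antinegative semiring with Z(Zⱼ) closed under addition, |Zⱼ| ≥ 3, |Zⱼ \ Z(Zⱼ)| = 1. Then dim(Γ₁(S)) = |S| − 2^{m+n+1} − |R| + 3 = |Z(S)| − 2^{m+n+1} + 2. -/

import Mathlib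

/-- `x` is a zero-divisor of the commutative semiring `S`. -/
def IsZD {S : Type*} [CommSemiring S] (x : S) : Prop :=
  ∃ y : S, y ≠ 0 ∧ x * y = 0

/-- The total graph of a commutative semiring: distinct `x, y` are adjacent
iff `x + y` is a zero-divisor. -/
def totalGraph (S : Type*) [CommSemiring S] : SimpleGraph S where
  Adj x y := x ≠ y ∧ IsZD (x + y)
  symm := by
    constructor
    intro x y h
    exact ⟨h.1.symm, by rw [add_comm]; exact h.2⟩
  loopless := by constructor; intro x h; exact h.1 rfl

/-- The induced subgraph of the total graph on the set of zero-divisors. -/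
def gamma1 (S : Type*) [CommSemiring S] : SimpleGraph {x : S // IsZD x} :=
  SimpleGraph.comap Subtype.val (totalGraph S)

/-- A resolving set: distinct vertices have distinct distance vectors to `W`. -/
def IsResolving {V : Type*} (G : SimpleGraph V) (W : Set V) : Prop :=
  ∀ x y : V, (∀ w ∈ W, G.dist x w = G.dist y w) → x = y

/-- The metric dimension: the least cardinality of a resolving set. -/
noncomputable def metricDim {V : Type*} (G : SimpleGraph V) : ℕ :=
  sInf {k | ∃ W : Set V, W.Finite ∧ W.ncard = k ∧ IsResolving G W}

/-- The Boolean semiring `𝔹 = {0,1}` with `1 + 1 = 1`. -/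
inductive BB : Type
  | zero : BB
  | one : BB
deriving DecidableEq

instance : Zero BB := ⟨.zero⟩
instance : One BB := ⟨.one⟩
instance : Add BB := ⟨fun x y => match x, y with | .zero, y => y | .one, _ => .one⟩
instance : Mul BB := ⟨fun x y => match x, y with | .zero, _ => .zero | .one, y => y⟩
instance : Fintype BB := ⟨{.zero, .one}, by intro x; cases x <;> decide⟩

instance : CommSemiring BB where
  add_assoc := by decide
  zero_add := by decide
  add_zero := by decide
  add_comm := by decide
  mul_assoc := by decide
  one_mul := by decide
  mul_one := by decide
  left_distrib := by decide
  right_distrib := by decide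
  zero_mul := by decide
  mul_zero := by decide
  mul_comm := by decide
  nsmul := nsmulRec
  npow := npowRec


/-!
Whether an element of `S = R × ∏ Bᵢ × ∏ Zⱼ` is a zero-divisor, and whether a sum of two
elements is one, depends only on its pattern: the set of coordinates at which it is a
zero-divisor. Two zero-divisors are adjacent in `Γ₁(S)` iff their patterns meet, so `Γ₁(S)` is
the intersection graph of the patterns, which range over all nonempty subsets of the
`m + n + 1` coordinates, and `0` is a universal vertex. Vertices with the same pattern are
twins, so outside a resolving set every pattern occurs at most once; the pattern `{R}` has the
single vertex `(0, 1, …, 1)`, and a short case analysis shows that one more pattern must be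
missing, so at most `2 ^ (m + n + 1) - 2` vertices lie outside a resolving set. Conversely the
complement of a transversal of the remaining patterns resolves: `|R| ≥ 3` provides a second
vertex with each singleton pattern `{Bᵢ}`, `{Zⱼ}`, and these vertices detect every coordinate.
-/

section ZeroDivisor

variable {A A' : Type*} [CommSemiring A] [CommSemiring A']

lemma not_isZD_iff {x : A} : ¬ IsZD x ↔ ∀ y, x * y = 0 → y = 0 := by
  simp only [IsZD, not_exists, not_and, not_imp_not]

lemma isZD_zero [Nontrivial A] : IsZD (0 : A) :=
  ⟨1, one_ne_zero, zero_mul 1⟩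

lemma not_isZD_one : ¬ IsZD (1 : A) :=
  fun ⟨_, hy, h⟩ => hy (by simpa using h)

lemma RingEquiv.isZD_apply_iff (e : A ≃+* A') {x : A} : IsZD (e x) ↔ IsZD x := by
  refine ⟨fun ⟨y, hy, h⟩ => ⟨e.symm y, by simpa using hy, ?_⟩,
    fun ⟨y, hy, h⟩ => ⟨e y, by simpa using hy, ?_⟩⟩
  · simpa using congrArg e.symm h
  · rw [← map_mul, h, map_zero]

lemma not_isZD_add_of_not_isZD (anti : ∀ a b : A, a + b = 0 → a = 0 ∧ b = 0) {a : A}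
    (ha : ¬ IsZD a) (b : A) : ¬ IsZD (a + b) := by
  rw [not_isZD_iff] at ha ⊢
  intro y hy
  rw [add_mul] at hy
  exact ha y (anti _ _ hy).1

lemma isZD_add_iff (anti : ∀ a b : A, a + b = 0 → a = 0 ∧ b = 0)
    (closed : ∀ a b : A, IsZD a → IsZD b → IsZD (a + b)) (a b : A) :
    IsZD (a + b) ↔ IsZD a ∧ IsZD b := by
  refine ⟨fun h => ⟨?_, ?_⟩, fun h => closed a b h.1 h.2⟩
  · by_contra ha
    exact not_isZD_add_of_not_isZD anti ha b h
  · by_contra hb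
    exact not_isZD_add_of_not_isZD anti hb a (add_comm a b ▸ h)

lemma isZD_prod_iff {x : A × A'} : IsZD x ↔ IsZD x.1 ∨ IsZD x.2 := by
  constructor
  · rintro ⟨y, hy, hxy⟩
    by_contra! h
    rw [not_isZD_iff, not_isZD_iff] at h
    exact hy (Prod.ext (h.1 _ congr(($hxy).1)) (h.2 _ congr(($hxy).2)))
  · rintro (⟨w, hw, h⟩ | ⟨w, hw, h⟩)
    · exact ⟨(w, 0), by simp [hw], Prod.ext h (mul_zero _)⟩
    · exact ⟨(0, w), by simp [hw], Prod.ext (mul_zero _) h⟩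

lemma isZD_pi_iff {ι : Type*} {M : ι → Type*} [∀ i, CommSemiring (M i)] {x : ∀ i, M i} :
    IsZD x ↔ ∃ i, IsZD (x i) := by
  classical
  constructor
  · rintro ⟨y, hy, hxy⟩
    by_contra! h
    exact hy (funext fun i => not_isZD_iff.1 (h i) _ (congrFun hxy i))
  · rintro ⟨i, w, hw, h⟩
    exact ⟨Pi.single i w, by simpa using hw, by rw [← Pi.single_mul_right, h, Pi.single_zero]⟩

end ZeroDivisor

lemma Nat.card_subtype_add_card_subtype_not {α : Type*} [Finite α] (p : α → Prop) :
    Nat.card {x // p x} + Nat.card {x // ¬ p x} = Nat.card α := by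
  classical
  rw [← Nat.card_sum]
  exact Nat.card_congr (Equiv.sumCompl p)

namespace BB

instance : Nontrivial BB := ⟨⟨0, 1, by decide⟩⟩

lemma isZD_iff (x : BB) : IsZD x ↔ x = 0 := by
  cases x
  · exact iff_of_true ⟨1, by decide, rfl⟩ rfl
  · exact iff_of_false not_isZD_one (by decide)

lemma eq_one_of_not_isZD {x : BB} (h : ¬ IsZD x) : x = 1 := by
  cases x
  · exact absurd ((isZD_iff _).2 rfl) h
  · rfl

lemma isZD_add_iff (a b : BB) : IsZD (a + b) ↔ IsZD a ∧ IsZD b := by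
  simp only [isZD_iff]
  revert a b
  decide

variable {A : Type*} [CommSemiring A]

lemma isZD_add_iff_of_ringEquiv (e : A ≃+* BB) (a b : A) :
    IsZD (a + b) ↔ IsZD a ∧ IsZD b := by
  rw [← e.isZD_apply_iff, ← e.isZD_apply_iff (x := a), ← e.isZD_apply_iff (x := b), map_add]
  exact isZD_add_iff (e a) (e b)

lemma eq_one_of_not_isZD_of_ringEquiv (e : A ≃+* BB) {a : A} (h : ¬ IsZD a) : a = 1 :=
  e.injective (by rw [map_one]; exact eq_one_of_not_isZD (e.isZD_apply_iff.not.2 h))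

end BB

section UniversalVertex

open SimpleGraph

variable {V : Type*} {G : SimpleGraph V} {z : V}

lemma SimpleGraph.reachable_of_forall_adj (hz : ∀ v, v ≠ z → G.Adj z v) (u v : V) :
    G.Reachable u v := by
  have hreach : ∀ v, G.Reachable z v := fun v => by
    by_cases hv : v = z
    · exact hv ▸ .rfl
    · exact (hz v hv).reachable
  exact (hreach u).symm.trans (hreach v)

lemma SimpleGraph.dist_eq_two_of_forall_adj (hz : ∀ v, v ≠ z → G.Adj z v) {u v : V}
    (huv : u ≠ v) (h : ¬ G.Adj u v) : G.dist u v = 2 := by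
  have hu : u ≠ z := fun hu => h (hu ▸ hz v (hu ▸ huv).symm)
  have hv : v ≠ z := fun hv => h (hv ▸ (hz u (hv ▸ huv)).symm)
  let walk : G.Walk u v := .cons (hz u hu).symm (.cons (hz v hv) .nil)
  have hle : G.dist u v ≤ 2 := dist_le walk
  have hpos : 0 < G.dist u v := Reachable.pos_dist_of_ne ⟨walk⟩ huv
  have hne : G.dist u v ≠ 1 := fun h1 => h (dist_eq_one_iff_adj.1 h1)
  omega

/-- With a universal vertex, distances between distinct vertices are `1` or `2`. -/
lemma isResolving_iff_of_forall_adj (hz : ∀ v, v ≠ z → G.Adj z v) {W : Set V} :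
    IsResolving G W ↔
      ∀ x y, x ∉ W → y ∉ W → (∀ w ∈ W, G.Adj x w ↔ G.Adj y w) → x = y := by
  constructor
  · intro hW x y hx hy hadj
    refine hW x y fun w hw => ?_
    have hxw : x ≠ w := (ne_of_mem_of_not_mem hw hx).symm
    have hyw : y ≠ w := (ne_of_mem_of_not_mem hw hy).symm
    by_cases h : G.Adj x w
    · rw [dist_eq_one_iff_adj.2 h, dist_eq_one_iff_adj.2 ((hadj w hw).1 h)]
    · rw [G.dist_eq_two_of_forall_adj hz hxw h,
        G.dist_eq_two_of_forall_adj hz hyw (mt (hadj w hw).2 h)]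
  · intro h x y hd
    by_cases hx : x ∈ W
    · exact ((G.reachable_of_forall_adj hz y x).dist_eq_zero_iff.1
        (by rw [← hd x hx, dist_self])).symm
    by_cases hy : y ∈ W
    · exact (G.reachable_of_forall_adj hz x y).dist_eq_zero_iff.1 (by rw [hd y hy, dist_self])
    exact h x y hx hy fun w hw => by rw [← dist_eq_one_iff_adj, ← dist_eq_one_iff_adj, hd w hw]

end UniversalVertex

lemma metricDim_eq_of_isResolving {V : Type*} [Finite V] {G : SimpleGraph V} {W : Set V}
    (hW : IsResolving G W) (hmin : ∀ W', IsResolving G W' → W.ncard ≤ W'.ncard) :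
    metricDim G = W.ncard :=
  le_antisymm (Nat.sInf_le ⟨W, W.toFinite, rfl, hW⟩)
    (le_csInf ⟨_, W, W.toFinite, rfl, hW⟩ fun _ ⟨W', _, hW'c, hW'⟩ => hW'c ▸ hmin W' hW')

lemma Set.ncard_compl_pair_empty {ι : Type*} [Fintype ι] {q : Set ι} (hq : q.Nonempty) :
    ({∅, q}ᶜ : Set (Set ι)).ncard = 2 ^ Fintype.card ι - 2 := by
  rw [Set.ncard_compl, Set.ncard_pair hq.ne_empty.symm, Nat.card_eq_fintype_card, Fintype.card_set]

def IsIntersectionGraph {V ι : Type*} (G : SimpleGraph V) (π : V → Set ι) : Prop :=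
  ∀ u v, G.Adj u v ↔ u ≠ v ∧ ¬ Disjoint (π u) (π v)

namespace IsIntersectionGraph

variable {V ι : Type*} {G : SimpleGraph V} {π : V → Set ι} (hG : IsIntersectionGraph G π)
  (hne : ∀ v, (π v).Nonempty) (hsurj : ∀ p : Set ι, p.Nonempty → ∃ v, π v = p)
include hG hne hsurj

lemma isResolving_iff [Nonempty ι] {W : Set V} :
    IsResolving G W ↔ ∀ x y, x ∉ W → y ∉ W →
      (∀ w ∈ W, ¬ Disjoint (π x) (π w) ↔ ¬ Disjoint (π y) (π w)) → x = y := by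
  obtain ⟨z, hz⟩ := hsurj Set.univ Set.univ_nonempty
  have hzadj : ∀ v, v ≠ z → G.Adj z v := fun v hv =>
    (hG z v).2 ⟨hv.symm, by rw [hz, Set.univ_disjoint]; exact (hne v).ne_empty⟩
  have hadj : ∀ x w, x ∉ W → w ∈ W → (G.Adj x w ↔ ¬ Disjoint (π x) (π w)) :=
    fun x w hx hw => by rw [hG, and_iff_right (ne_of_mem_of_not_mem hw hx).symm]
  rw [isResolving_iff_of_forall_adj hzadj]
  exact forall₄_congr fun x y hx hy => imp_congr_left <| forall₂_congr fun w hw => by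
    rw [hadj x w hx hw, hadj y w hy hw]

lemma injOn_compl_of_isResolving [Nonempty ι] {W : Set V} (hW : IsResolving G W) :
    Set.InjOn π Wᶜ :=
  fun x hx y hy hxy => (hG.isResolving_iff hne hsurj).1 hW x y hx hy fun w _ => by rw [hxy]

/-- Besides `∅`, a resolving set misses a second pattern: `{k₀}` if its only vertex lies in `W`,
otherwise `univ` or `{k₀}ᶜ`, because vertices with these two patterns are adjacent to every
vertex other than the one with pattern `{k₀}`. -/
lemma exists_nonempty_notMem_image_compl [Nontrivial ι] {k₀ : ι}
    (huniq : (π ⁻¹' {{k₀}}).Subsingleton) {W : Set V} (hW : IsResolving G W) :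
    ∃ q : Set ι, q.Nonempty ∧ q ∉ π '' Wᶜ := by
  obtain ⟨v₀, hv₀⟩ := hsurj {k₀} (Set.singleton_nonempty k₀)
  by_cases hv₀W : v₀ ∈ W
  · refine ⟨{k₀}, Set.singleton_nonempty k₀, ?_⟩
    rintro ⟨v, hv, hvk⟩
    exact hv (huniq hvk hv₀ ▸ hv₀W)
  by_cases htop : Set.univ ∈ π '' Wᶜ
  · obtain ⟨k₁, hk₁⟩ := exists_ne k₀
    refine ⟨{k₀}ᶜ, ⟨k₁, hk₁⟩, ?_⟩
    rintro ⟨y, hy, hyk⟩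
    obtain ⟨x, hx, hxu⟩ := htop
    have hxy : x ≠ y := fun h => by simpa [h, hyk] using congrArg (k₀ ∈ ·) hxu
    refine hxy ((hG.isResolving_iff hne hsurj).1 hW x y hx hy fun w hw => ?_)
    have hw₀ : π w ≠ {k₀} := fun h => hv₀W (huniq hv₀ h ▸ hw)
    rw [hxu, hyk, Set.univ_disjoint, Set.disjoint_compl_left_iff_subset,
      (hne w).subset_singleton_iff]
    exact iff_of_true (hne w).ne_empty hw₀
  · exact ⟨Set.univ, Set.univ_nonempty, htop⟩

lemma ncard_compl_le_of_isResolving [Fintype ι] [Nontrivial ι] {k₀ : ι}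
    (huniq : (π ⁻¹' {{k₀}}).Subsingleton) {W : Set V} (hW : IsResolving G W) :
    Wᶜ.ncard ≤ 2 ^ Fintype.card ι - 2 := by
  obtain ⟨q, hq, hqW⟩ := hG.exists_nonempty_notMem_image_compl hne hsurj huniq hW
  rw [← Set.ncard_compl_pair_empty hq]
  refine Set.ncard_le_ncard_of_injOn π (fun v hv => ?_)
    (hG.injOn_compl_of_isResolving hne hsurj hW)
  simp only [Set.mem_compl_iff, Set.mem_insert_iff, Set.mem_singleton_iff, not_or]
  exact ⟨(hne v).ne_empty, fun h => hqW ⟨v, hv, h⟩⟩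

/-- The complement of a transversal of the patterns other than `∅` and `{k₀}` resolves `G`:
the vertex with pattern `{k₀}` and a second vertex with each pattern `{k}`, `k ≠ k₀`, lie
outside the transversal and detect the coordinates of a pattern. -/
lemma exists_isResolving_ncard_compl [Fintype ι] {k₀ : ι}
    (htwo : ∀ k ≠ k₀, (π ⁻¹' {{k}}).Nontrivial) :
    ∃ W : Set V, IsResolving G W ∧ Wᶜ.ncard = 2 ^ Fintype.card ι - 2 := by
  have : Nonempty ι := ⟨k₀⟩
  have : Nonempty V := (hsurj Set.univ Set.univ_nonempty).nonempty
  set D : Set (Set ι) := {∅, {k₀}}ᶜ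
  set T := Function.invFun π '' D
  have hD : ∀ p ∈ D, π (Function.invFun π p) = p := fun p hp =>
    Function.invFun_eq (hsurj p (Set.nonempty_iff_ne_empty.2 fun h => hp (.inl h)))
  have hT : ∀ v ∈ T, Function.invFun π (π v) = v := by
    rintro _ ⟨p, hp, rfl⟩
    rw [hD p hp]
  have hdetect : ∀ k, ∃ w ∉ T, π w = {k} := by
    intro k
    by_cases hk : k = k₀
    · obtain ⟨w, hw⟩ := hsurj {k} (Set.singleton_nonempty k)
      refine ⟨w, ?_, hw⟩
      rintro ⟨p, hp, rfl⟩
      exact hp (.inr (hD p hp ▸ hk ▸ hw))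
    · by_contra! h
      have hmem : ∀ w, π w = {k} → w ∈ T := fun w hw => by_contra fun hwT => h w hwT hw
      obtain ⟨u, hu, v, hv, huv⟩ := htwo k hk
      exact huv (by rw [← hT u (hmem u hu), ← hT v (hmem v hv), hu, hv])
  refine ⟨Tᶜ, ?_, ?_⟩
  · rw [hG.isResolving_iff hne hsurj]
    intro x y hx hy hxy
    rw [Set.notMem_compl_iff] at hx hy
    rw [← hT x hx, ← hT y hy]
    congr 1
    ext k
    obtain ⟨w, hwT, hw⟩ := hdetect k
    simpa [hw] using hxy w hwT
  · rw [compl_compl, Set.InjOn.ncard_image (Set.LeftInvOn.injOn hD),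
      Set.ncard_compl_pair_empty (Set.singleton_nonempty k₀)]

theorem metricDim_add [Finite V] [Fintype ι] [Nontrivial ι] {k₀ : ι}
    (huniq : (π ⁻¹' {{k₀}}).Subsingleton)
    (htwo : ∀ k ≠ k₀, (π ⁻¹' {{k}}).Nontrivial) :
    metricDim G + (2 ^ Fintype.card ι - 2) = Nat.card V := by
  obtain ⟨W, hW, hWc⟩ := hG.exists_isResolving_ncard_compl hne hsurj htwo
  rw [metricDim_eq_of_isResolving hW fun W' hW' => ?_, ← hWc, Set.ncard_add_ncard_compl]
  have := hG.ncard_compl_le_of_isResolving hne hsurj huniq hW'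
  have := Set.ncard_add_ncard_compl W
  have := Set.ncard_add_ncard_compl W'
  omega

end IsIntersectionGraph

section ProductSemiring

variable {m n : ℕ} {R : Type*} [CommSemiring R] {B : Fin m → Type*} [∀ i, CommSemiring (B i)]
  {Z : Fin n → Type*} [∀ j, CommSemiring (Z j)]

/-- The coordinates at which `x` is a zero-divisor; `none` indexes the factor `R`. -/
def zdSupport (x : R × (∀ i, B i) × (∀ j, Z j)) : Set (Option (Fin m ⊕ Fin n))
  | none => IsZD x.1
  | some (.inl i) => IsZD (x.2.1 i)
  | some (.inr j) => IsZD (x.2.2 j)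

@[simp] lemma none_mem_zdSupport {x : R × (∀ i, B i) × (∀ j, Z j)} :
    none ∈ zdSupport x ↔ IsZD x.1 := Iff.rfl

@[simp] lemma some_inl_mem_zdSupport {x : R × (∀ i, B i) × (∀ j, Z j)} {i : Fin m} :
    some (.inl i) ∈ zdSupport x ↔ IsZD (x.2.1 i) := Iff.rfl

@[simp] lemma some_inr_mem_zdSupport {x : R × (∀ i, B i) × (∀ j, Z j)} {j : Fin n} :
    some (.inr j) ∈ zdSupport x ↔ IsZD (x.2.2 j) := Iff.rfl

lemma isZD_iff_zdSupport_nonempty {x : R × (∀ i, B i) × (∀ j, Z j)} :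
    IsZD x ↔ (zdSupport x).Nonempty := by
  simp only [isZD_prod_iff, isZD_pi_iff, Set.Nonempty, Option.exists, Sum.exists]
  rfl

lemma zdSupport_add (hR : ∀ a b : R, IsZD (a + b) ↔ IsZD a ∧ IsZD b)
    (hB : ∀ i (a b : B i), IsZD (a + b) ↔ IsZD a ∧ IsZD b)
    (hZ : ∀ j (a b : Z j), IsZD (a + b) ↔ IsZD a ∧ IsZD b)
    (x y : R × (∀ i, B i) × (∀ j, Z j)) :
    zdSupport (x + y) = zdSupport x ∩ zdSupport y := by
  ext (_ | i | j)
  · exact hR _ _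
  · exact hB i _ _
  · exact hZ j _ _

open Classical in
noncomputable def ofZDSupport (p : Set (Option (Fin m ⊕ Fin n))) (r : R) :
    R × (∀ i, B i) × (∀ j, Z j) :=
  (if none ∈ p then 0 else r, fun i => if some (.inl i) ∈ p then 0 else 1,
    fun j => if some (.inr j) ∈ p then 0 else 1)

lemma zdSupport_ofZDSupport [Nontrivial R] [∀ i, Nontrivial (B i)] [∀ j, Nontrivial (Z j)]
    (p : Set (Option (Fin m ⊕ Fin n))) {r : R} (hr : ¬ IsZD r) :
    zdSupport (ofZDSupport (B := B) (Z := Z) p r) = p := by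
  ext (_ | i | j) <;>
    simp only [ofZDSupport, none_mem_zdSupport, some_inl_mem_zdSupport, some_inr_mem_zdSupport] <;>
    split_ifs with h <;> simp [h, hr, isZD_zero, not_isZD_one]

lemma ofZDSupport_fst {p : Set (Option (Fin m ⊕ Fin n))} (hp : none ∉ p) (r : R) :
    (ofZDSupport (B := B) (Z := Z) p r).1 = r :=
  if_neg hp

lemma eq_mk_one_one_of_zdSupport_subset (hB : ∀ i (b : B i), ¬ IsZD b → b = 1)
    (hZ : ∀ j (z : Z j), ¬ IsZD z → z = 1) {x : R × (∀ i, B i) × (∀ j, Z j)}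
    (h : zdSupport x ⊆ {none}) : x = (x.1, 1, 1) :=
  Prod.ext rfl <| Prod.ext
    (funext fun i => hB i _ fun hi => by simpa using h (a := some (.inl i)) hi)
    (funext fun j => hZ j _ fun hj => by simpa using h (a := some (.inr j)) hj)

lemma nat_card_isZD_add_ncard_not_isZD_fst [Finite R] [∀ i, Finite (B i)] [∀ j, Finite (Z j)]
    (hB : ∀ i (b : B i), ¬ IsZD b → b = 1) (hZ : ∀ j (z : Z j), ¬ IsZD z → z = 1) :
    Nat.card {x : R × (∀ i, B i) × (∀ j, Z j) // IsZD x} + {r : R | ¬ IsZD r}.ncard =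
      Nat.card (R × (∀ i, B i) × (∀ j, Z j)) := by
  rw [← Nat.card_subtype_add_card_subtype_not (IsZD (S := R × (∀ i, B i) × (∀ j, Z j))),
    ← Nat.card_coe_set_eq]
  congr 1
  exact Nat.card_congr
    { toFun := fun r =>
        ⟨(r.1, 1, 1), fun h => r.2 (by simpa [isZD_prod_iff, not_isZD_one] using h)⟩
      invFun := fun x => ⟨x.1.1, fun h => x.2 (isZD_prod_iff.2 (.inl h))⟩
      left_inv := fun r => rfl
      right_inv := fun x => Subtype.ext (eq_mk_one_one_of_zdSupport_subset hB hZ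
        fun k hk => absurd (isZD_iff_zdSupport_nonempty.2 ⟨k, hk⟩) x.2).symm }

lemma isIntersectionGraph_gamma1 (hR : ∀ a b : R, IsZD (a + b) ↔ IsZD a ∧ IsZD b)
    (hB : ∀ i (a b : B i), IsZD (a + b) ↔ IsZD a ∧ IsZD b)
    (hZ : ∀ j (a b : Z j), IsZD (a + b) ↔ IsZD a ∧ IsZD b) :
    IsIntersectionGraph (gamma1 (R × (∀ i, B i) × (∀ j, Z j))) fun v => zdSupport v.1 := by
  intro u v
  change u.1 ≠ v.1 ∧ IsZD (u.1 + v.1) ↔ _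
  rw [isZD_iff_zdSupport_nonempty, zdSupport_add hR hB hZ, Subtype.val_injective.ne_iff,
    Set.not_disjoint_iff_nonempty_inter]

lemma zdSupport_preimage_singleton_none_subsingleton (hR : ∀ r : R, IsZD r → r = 0)
    (hB : ∀ i (b : B i), ¬ IsZD b → b = 1) (hZ : ∀ j (z : Z j), ¬ IsZD z → z = 1) :
    ((fun v : {x : R × (∀ i, B i) × (∀ j, Z j) // IsZD x} => zdSupport v.1) ⁻¹'
      {{none}}).Subsingleton := by
  intro u (hu : zdSupport u.1 = {none}) v (hv : zdSupport v.1 = {none})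
  rw [Subtype.ext_iff, eq_mk_one_one_of_zdSupport_subset hB hZ hu.subset,
    eq_mk_one_one_of_zdSupport_subset hB hZ (x := v.1) hv.subset,
    hR _ (hu ▸ rfl : none ∈ zdSupport u.1), hR _ (hv ▸ rfl : none ∈ zdSupport v.1)]

variable [Nontrivial R] [∀ i, Nontrivial (B i)] [∀ j, Nontrivial (Z j)]

lemma isZD_ofZDSupport {p : Set (Option (Fin m ⊕ Fin n))} (hp : p.Nonempty) {r : R}
    (hr : ¬ IsZD r) : IsZD (ofZDSupport (B := B) (Z := Z) p r) :=
  isZD_iff_zdSupport_nonempty.2 ((zdSupport_ofZDSupport (B := B) (Z := Z) p hr).symm ▸ hp)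

lemma exists_zdSupport_eq {p : Set (Option (Fin m ⊕ Fin n))} (hp : p.Nonempty) :
    ∃ v : {x : R × (∀ i, B i) × (∀ j, Z j) // IsZD x}, zdSupport v.1 = p :=
  ⟨⟨_, isZD_ofZDSupport hp not_isZD_one⟩, zdSupport_ofZDSupport p not_isZD_one⟩

lemma zdSupport_preimage_singleton_some_nontrivial (hR : {r : R | ¬ IsZD r}.Nontrivial)
    {k : Option (Fin m ⊕ Fin n)} (hk : k ≠ none) :
    ((fun v : {x : R × (∀ i, B i) × (∀ j, Z j) // IsZD x} => zdSupport v.1) ⁻¹'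
      {{k}}).Nontrivial := by
  obtain ⟨r₁, hr₁, r₂, hr₂, hr⟩ := hR
  have hk : none ∉ ({k} : Set (Option (Fin m ⊕ Fin n))) := by simpa using hk.symm
  refine ⟨⟨_, isZD_ofZDSupport (Set.singleton_nonempty k) hr₁⟩, zdSupport_ofZDSupport _ hr₁,
    ⟨_, isZD_ofZDSupport (Set.singleton_nonempty k) hr₂⟩, zdSupport_ofZDSupport _ hr₂,
    fun h => hr ?_⟩
  rw [← ofZDSupport_fst (B := B) (Z := Z) hk r₁, ← ofZDSupport_fst (B := B) (Z := Z) hk r₂]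
  exact congrArg (fun v => v.1.1) h

end ProductSemiring

theorem metricDim_gamma1_add {m n : ℕ} (hmn : 1 ≤ m + n) {R : Type*} [CommSemiring R] [Finite R]
    {B : Fin m → Type*} [∀ i, CommSemiring (B i)] [∀ i, Finite (B i)]
    [∀ i, Nontrivial (B i)] {Z : Fin n → Type*} [∀ j, CommSemiring (Z j)] [∀ j, Finite (Z j)]
    [∀ j, Nontrivial (Z j)]
    (hRadd : ∀ a b : R, IsZD (a + b) ↔ IsZD a ∧ IsZD b) (hR0 : ∀ r : R, IsZD r → r = 0)
    (hR : {r : R | ¬ IsZD r}.Nontrivial)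
    (hBadd : ∀ i (a b : B i), IsZD (a + b) ↔ IsZD a ∧ IsZD b)
    (hB1 : ∀ i (b : B i), ¬ IsZD b → b = 1)
    (hZadd : ∀ j (a b : Z j), IsZD (a + b) ↔ IsZD a ∧ IsZD b)
    (hZ1 : ∀ j (z : Z j), ¬ IsZD z → z = 1) :
    metricDim (gamma1 (R × (∀ i, B i) × (∀ j, Z j))) + (2 ^ (m + n + 1) - 2) =
      Nat.card {x : R × (∀ i, B i) × (∀ j, Z j) // IsZD x} := by
  have : Nontrivial R := let ⟨r₁, _, r₂, _, hr⟩ := hR; nontrivial_of_ne r₁ r₂ hr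
  have : Nonempty (Fin m ⊕ Fin n) := Fintype.card_pos_iff.1 (by simp; omega)
  have hcard : Fintype.card (Option (Fin m ⊕ Fin n)) = m + n + 1 := by simp
  rw [← hcard]
  exact (isIntersectionGraph_gamma1 hRadd hBadd hZadd).metricDim_add
    (fun v => isZD_iff_zdSupport_nonempty.1 v.2) (fun _ => exists_zdSupport_eq)
    (zdSupport_preimage_singleton_none_subsingleton hR0 hB1 hZ1)
    fun _ => zdSupport_preimage_singleton_some_nontrivial hR
theorem stmt16 (m n : ℕ) (hmn : 1 ≤ m + n)
    {R : Type*} [CommSemiring R] [Fintype R]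
    (antiR : ∀ a b : R, a + b = 0 → a = 0 ∧ b = 0)
    (hcardR : 3 ≤ Nat.card R) (hzR : Set.ncard {x : R | IsZD x} = 1)
    {B : Fin m → Type*} [∀ i, CommSemiring (B i)]
    (hB : ∀ i, Nonempty (B i ≃+* BB))
    {Z : Fin n → Type*} [∀ j, CommSemiring (Z j)] [∀ j, Fintype (Z j)]
    (antiZ : ∀ j, ∀ a b : Z j, a + b = 0 → a = 0 ∧ b = 0)
    (closedZ : ∀ j, ∀ a b : Z j, IsZD a → IsZD b → IsZD (a + b))
    (hcardZ : ∀ j, 3 ≤ Nat.card (Z j))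
    (hnzZ : ∀ j, Set.ncard {x : Z j | ¬ IsZD x} = 1) :
    (metricDim (gamma1 (R × (∀ i, B i) × (∀ j, Z j))) : ℤ) =
        (Nat.card (R × (∀ i, B i) × (∀ j, Z j)) : ℤ) - 2 ^ (m + n + 1) - Nat.card R + 3 ∧
      (metricDim (gamma1 (R × (∀ i, B i) × (∀ j, Z j))) : ℤ) =
        (Nat.card {x : R × (∀ i, B i) × (∀ j, Z j) // IsZD x} : ℤ) - 2 ^ (m + n + 1) + 2 := by
  classical
  have eB : ∀ i, B i ≃+* BB := fun i => (hB i).some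
  have : ∀ i, Finite (B i) := fun i => .of_equiv _ (eB i).symm.toEquiv
  have : ∀ i, Nontrivial (B i) := fun i => (eB i).toEquiv.nontrivial
  have : ∀ j, Nontrivial (Z j) := fun j =>
    Finite.one_lt_card_iff_nontrivial.1 (by have := hcardZ j; omega)
  have : Nontrivial R := Finite.one_lt_card_iff_nontrivial.1 (by omega)
  have hR0 : ∀ r : R, IsZD r → r = 0 := fun r hr =>
    (Set.ncard_le_one (Set.toFinite _)).1 hzR.le r hr 0 isZD_zero
  have hB1 : ∀ i (b : B i), ¬ IsZD b → b = 1 := fun i _ =>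
    BB.eq_one_of_not_isZD_of_ringEquiv (eB i)
  have hZ1 : ∀ j (z : Z j), ¬ IsZD z → z = 1 := fun j z hz =>
    (Set.ncard_le_one (Set.toFinite _)).1 (hnzZ j).le z hz 1 not_isZD_one
  have hRnz := Set.ncard_add_ncard_compl {r : R | IsZD r}
  rw [hzR, Set.compl_ofPred] at hRnz
  have hdim := metricDim_gamma1_add hmn
    (isZD_add_iff antiR fun a b ha hb => by rw [hR0 a ha, hR0 b hb, add_zero]; exact isZD_zero)
    hR0 (Set.one_lt_ncard_iff_nontrivial.1 (by omega))
    (fun i => BB.isZD_add_iff_of_ringEquiv (eB i)) hB1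
    (fun j => isZD_add_iff (antiZ j) (closedZ j)) hZ1
  have hsplit := nat_card_isZD_add_ncard_not_isZD_fst (R := R) hB1 hZ1
  have hK : 2 ≤ 2 ^ (m + n + 1) := Nat.le_self_pow (by omega) 2
  rw [show (2 : ℤ) ^ (m + n + 1) = ((2 ^ (m + n + 1) : ℕ) : ℤ) by push_cast; rfl]
  generalize 2 ^ (m + n + 1) = K at *
  omega
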